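/- Let ρ be a d×d complex density matrix that is pure, i.e. ρ² = ρ. Then the geometric measure of coherence equals C_g(ρ) = 1 - max_{1≤i≤d} ρ_ii, where ρ_ii are the diagonal entries of ρ. -/

import Mathlib

open scoped ComplexOrder

open Matrix Classical in
/-- The positive semidefinite square root of a matrix (junk value `0` if not PSD). -/
noncomputable def msqrt {d : ℕ} (A : Matrix (Fin d) (Fin d) ℂ) : Matrix (Fin d) (Fin d) ℂ :=
  if h : A.PosSemidef then
    (h.1.eigenvectorUnitary : Matrix (Fin d) (Fin d) ℂ) *
      diagonal (((↑) : ℝ → ℂ) ∘ Real.sqrt ∘ h.1.eigenvalues) *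
      (star h.1.eigenvectorUnitary : Matrix (Fin d) (Fin d) ℂ)
  else 0

/-- A density matrix: positive semidefinite with trace 1. -/
def IsDensity {d : ℕ} (ρ : Matrix (Fin d) (Fin d) ℂ) : Prop :=
  ρ.PosSemidef ∧ ρ.trace = 1

/-- An incoherent state: a diagonal density matrix. -/
def IsIncoherent {d : ℕ} (σ : Matrix (Fin d) (Fin d) ℂ) : Prop :=
  IsDensity σ ∧ σ.IsDiag

/-- The fidelity `F(ρ,σ) = (Tr √(√σ ρ √σ))²`. -/
noncomputable def fid {d : ℕ} (ρ σ : Matrix (Fin d) (Fin d) ℂ) : ℝ :=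
  ((msqrt (msqrt σ * ρ * msqrt σ)).trace.re) ^ 2

/-- The geometric measure of coherence `C_g(ρ) = 1 - sup {F(ρ,σ) : σ incoherent}`. -/
noncomputable def Cg {d : ℕ} (ρ : Matrix (Fin d) (Fin d) ℂ) : ℝ :=
  1 - sSup {x : ℝ | ∃ σ : Matrix (Fin d) (Fin d) ℂ, IsIncoherent σ ∧ x = fid ρ σ}


open Matrix

open scoped MatrixOrder in
lemma msqrt_eq {d : ℕ} {A B : Matrix (Fin d) (Fin d) ℂ} (hB : B.PosSemidef)
    (h : B ^ 2 = A) : msqrt A = B := by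
  have hA : A.PosSemidef := h ▸ hB.pow 2
  rw [msqrt, dif_pos hA]
  have e1 : CFC.sqrt A = B := CFC.sqrt_unique (by rw [← h, pow_two]) hB.nonneg
  rw [← e1, CFC.sqrt_eq_real_sqrt A hA.nonneg, cfcₙ_eq_cfc, hA.1.cfc_eq]
  simp [IsHermitian.cfc]

lemma psd_vecMulVec {d : ℕ} (v : Fin d → ℂ) : (vecMulVec v (star v)).PosSemidef := by
  rw [vecMulVec_eq (Fin 1)]
  have : replicateRow (Fin 1) (star v) = (replicateCol (Fin 1) v)ᴴ := by
    ext i j; simp [replicateRow, replicateCol, conjTranspose]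
  rw [this]
  exact posSemidef_self_mul_conjTranspose _

lemma vecMulVec_sq {d : ℕ} (v : Fin d → ℂ) :
    (vecMulVec v (star v)) ^ 2
      = ((∑ k, Complex.normSq (v k) : ℝ) : ℂ) • vecMulVec v (star v) := by
  ext i j
  simp only [pow_two, mul_apply, vecMulVec_apply, Matrix.smul_apply, smul_eq_mul, Pi.star_apply]
  push_cast
  rw [Finset.sum_mul]
  congr 1 with k
  have : (Complex.normSq (v k) : ℂ) = star (v k) * v k := by
    rw [Complex.normSq_eq_conj_mul_self]; rfl
  rw [this]; ring

lemma trace_vecMulVec {d : ℕ} (v : Fin d → ℂ) :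
    (vecMulVec v (star v)).trace = ((∑ k, Complex.normSq (v k) : ℝ) : ℂ) := by
  rw [trace]
  push_cast
  congr 1 with k
  simp [vecMulVec_apply, Complex.mul_conj]

lemma trace_msqrt_vecMulVec {d : ℕ} (v : Fin d → ℂ) :
    (msqrt (vecMulVec v (star v))).trace
      = ((Real.sqrt (∑ k, Complex.normSq (v k)) : ℝ) : ℂ) := by
  set c : ℝ := ∑ k, Complex.normSq (v k) with hc
  have hc0 : 0 ≤ c := Finset.sum_nonneg fun k _ => Complex.normSq_nonneg _
  rcases eq_or_lt_of_le hc0 with h0 | hpos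
  · have hv : v = 0 := by
      funext k
      exact Complex.normSq_eq_zero.mp <|
        (Finset.sum_eq_zero_iff_of_nonneg (fun k _ => Complex.normSq_nonneg (v k))).mp h0.symm
          k (Finset.mem_univ k)
    have hW : vecMulVec v (star v) = 0 := by subst hv; ext i j; simp [vecMulVec_apply]
    rw [hW, msqrt_eq (Matrix.PosSemidef.zero) (by simp), ← h0]
    simp
  · set r : ℝ := (Real.sqrt c)⁻¹ with hr
    have hsc : 0 < Real.sqrt c := Real.sqrt_pos.mpr hpos
    have hr0 : 0 ≤ r := inv_nonneg.mpr hsc.le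
    set u : Fin d → ℂ := fun j => ((Real.sqrt r : ℝ) : ℂ) * v j with hu
    have h1 : ((Real.sqrt r : ℝ) : ℂ) * ((Real.sqrt r : ℝ) : ℂ) = (r : ℂ) := by
      rw [← Complex.ofReal_mul, Real.mul_self_sqrt hr0]
    have hB : vecMulVec u (star u) = ((r : ℝ) : ℂ) • vecMulVec v (star v) := by
      ext i j
      simp only [vecMulVec_apply, Pi.star_apply, Matrix.smul_apply, smul_eq_mul, hu, star_mul',
        Complex.star_def, Complex.conj_ofReal]
      rw [← h1]; ring
    have hpsd : (((r : ℝ) : ℂ) • vecMulVec v (star v)).PosSemidef := hB ▸ psd_vecMulVec u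
    have hsq : (((r : ℝ) : ℂ) • vecMulVec v (star v)) ^ 2 = vecMulVec v (star v) := by
      rw [smul_pow, vecMulVec_sq, smul_smul, ← hc]
      have : ((r : ℝ) : ℂ) ^ 2 * ((c : ℝ) : ℂ) = 1 := by
        rw [← Complex.ofReal_pow, ← Complex.ofReal_mul]
        norm_cast
        rw [hr, ← Real.sqrt_inv, Real.sq_sqrt (inv_nonneg.mpr hc0)]
        field_simp
      rw [this, one_smul]
    rw [msqrt_eq hpsd hsq, trace_smul, _root_.trace_vecMulVec, ← hc, smul_eq_mul,
      ← Complex.ofReal_mul]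
    congr 1
    rw [hr, inv_mul_eq_div, div_eq_iff hsc.ne', Real.mul_self_sqrt hc0]

lemma diag_nonneg {d : ℕ} {σ : Matrix (Fin d) (Fin d) ℂ} (h : σ.PosSemidef) (i : Fin d) :
    0 ≤ σ i i := h.diag_nonneg

lemma diag_re_eq {d : ℕ} {σ : Matrix (Fin d) (Fin d) ℂ} (h : σ.PosSemidef) (i : Fin d) :
    σ i i = (((σ i i).re : ℝ) : ℂ) := by
  have h0 := diag_nonneg h i
  rw [Complex.le_def] at h0
  apply Complex.ext <;> simp [h0.2.symm]

lemma msqrt_diagonal {d : ℕ} (q : Fin d → ℝ) (hq : ∀ i, 0 ≤ q i) :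
    msqrt (diagonal fun i => ((q i : ℝ) : ℂ))
      = diagonal fun i => ((Real.sqrt (q i) : ℝ) : ℂ) := by
  apply msqrt_eq
  · exact Matrix.PosSemidef.diagonal fun i => by
      simpa using Complex.zero_le_real.mpr (Real.sqrt_nonneg _)
  · rw [pow_two, diagonal_mul_diagonal]
    refine congrArg diagonal (funext fun i => ?_)
    rw [← Complex.ofReal_mul, Real.mul_self_sqrt (hq i)]

lemma fid_pure_incoherent {d : ℕ} (v : Fin d → ℂ) {σ : Matrix (Fin d) (Fin d) ℂ}
    (hσ : IsIncoherent σ) :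
    fid (vecMulVec v (star v)) σ = ∑ j, (σ j j).re * Complex.normSq (v j) := by
  obtain ⟨⟨hpsd, htr⟩, hdiag⟩ := hσ
  set q : Fin d → ℝ := fun i => (σ i i).re with hqdef
  have hq : ∀ i, 0 ≤ q i := fun i => by
    have := diag_nonneg hpsd i
    rw [Complex.le_def] at this
    simpa using this.1
  have hσeq : σ = diagonal fun i => ((q i : ℝ) : ℂ) := by
    rw [← hdiag.diagonal_diag]
    refine congrArg diagonal (funext fun i => ?_)
    exact diag_re_eq hpsd i
  have hmsq : msqrt σ = diagonal fun i => ((Real.sqrt (q i) : ℝ) : ℂ) := by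
    rw [hσeq, msqrt_diagonal q hq]
  set w : Fin d → ℂ := fun j => ((Real.sqrt (q j) : ℝ) : ℂ) * v j with hw
  have hmid : msqrt σ * vecMulVec v (star v) * msqrt σ = vecMulVec w (star w) := by
    rw [hmsq]
    ext i j
    simp only [mul_apply, diagonal_apply, vecMulVec_apply, Pi.star_apply, hw, star_mul',
      Complex.star_def, Complex.conj_ofReal]
    simp [Finset.mul_sum, Finset.sum_ite_eq, Finset.sum_ite_eq']
    ring
  rw [fid, hmid, trace_msqrt_vecMulVec, Complex.ofReal_re,
    Real.sq_sqrt (Finset.sum_nonneg fun k _ => Complex.normSq_nonneg _)]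
  congr 1 with j
  simp [hw, Complex.normSq_mul, Complex.normSq_ofReal, Real.mul_self_sqrt (hq j)]
  left; rfl

lemma pure_density_decomp {d : ℕ} {ρ : Matrix (Fin d) (Fin d) ℂ} (hρ : IsDensity ρ)
    (hpure : ρ * ρ = ρ) :
    ∃ v : Fin d → ℂ, ρ = vecMulVec v (star v) ∧ ∑ k, Complex.normSq (v k) = 1 := by
  obtain ⟨hpsd, htr⟩ := hρ
  have hH : ρ.IsHermitian := hpsd.1
  set U : Matrix (Fin d) (Fin d) ℂ := (hH.eigenvectorUnitary : Matrix (Fin d) (Fin d) ℂ)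
    with hU
  set μ : Fin d → ℝ := hH.eigenvalues with hμ
  set D : Matrix (Fin d) (Fin d) ℂ := diagonal (RCLike.ofReal ∘ μ) with hDdef
  have hspec : ρ = U * D * star U := hH.spectral_theorem
  have hUU' : star U * U = 1 := by
    exact_mod_cast Unitary.coe_star_mul_self hH.eigenvectorUnitary
  have cancel : ∀ M : Matrix (Fin d) (Fin d) ℂ, star U * (U * M * star U) * U = M := by
    intro M
    calc star U * (U * M * star U) * U
        = (star U * U) * M * (star U * U) := by simp only [Matrix.mul_assoc]
      _ = M := by rw [hUU', one_mul, mul_one]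
  have key : (U * D * star U) * (U * D * star U) = U * (D * D) * star U := by
    calc (U * D * star U) * (U * D * star U)
        = U * D * ((star U * U) * (D * star U)) := by simp only [Matrix.mul_assoc]
      _ = U * (D * D) * star U := by rw [hUU', one_mul]; simp only [Matrix.mul_assoc]
  have hD' : U * (D * D) * star U = U * D * star U := by
    rw [← key, ← hspec, hpure, hspec]
  have hD : D * D = D := by rw [← cancel (D * D), hD', cancel D]
  have hμ01 : ∀ i, μ i = 0 ∨ μ i = 1 := by
    intro i
    have h1 : (μ i : ℂ) * (μ i : ℂ) = (μ i : ℂ) := by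
      have := congrFun (congrFun hD i) i
      simpa [hDdef, diagonal_mul_diagonal, diagonal_apply_eq] using this
    have h2 : (μ i : ℂ) * ((μ i : ℂ) - 1) = 0 := by rw [mul_sub, h1]; ring
    rcases mul_eq_zero.mp h2 with h | h
    · left; exact_mod_cast h
    · right
      have : (μ i : ℂ) = 1 := by linear_combination h
      exact_mod_cast this
  have hsum : ∑ i, μ i = 1 := by
    have htrD : D.trace = 1 := by
      rw [hspec, Matrix.trace_mul_comm, ← Matrix.mul_assoc, hUU', one_mul] at htr
      exact htr
    have : ((∑ i, μ i : ℝ) : ℂ) = 1 := by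
      rw [← htrD, hDdef, trace_diagonal]
      push_cast
      rfl
    exact_mod_cast this
  have hex : ∃ i₀, μ i₀ = 1 := by
    by_contra h
    push_neg at h
    have : ∀ i, μ i = 0 := fun i => (hμ01 i).resolve_right (h i)
    simp [this] at hsum
  obtain ⟨i₀, hi₀⟩ := hex
  have hrest : ∀ j, j ≠ i₀ → μ j = 0 := by
    have hsplit : μ i₀ + ∑ j ∈ Finset.univ.erase i₀, μ j = 1 := by
      rw [Finset.add_sum_erase _ _ (Finset.mem_univ i₀)]; exact hsum
    have hzero : ∑ j ∈ Finset.univ.erase i₀, μ j = 0 := by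
      rw [hi₀] at hsplit; linarith
    intro j hj
    have := (Finset.sum_eq_zero_iff_of_nonneg (fun k _ => by
      rcases hμ01 k with h | h <;> rw [h] <;> norm_num)).mp hzero j
      (Finset.mem_erase.mpr ⟨hj, Finset.mem_univ j⟩)
    exact this
  refine ⟨fun j => U j i₀, ?_, ?_⟩
  · have hUD : U * D = Matrix.of fun j a => U j a * ((μ a : ℝ) : ℂ) := by
      ext j a; simp [hDdef, mul_diagonal]
    funext j k
    rw [hspec, hUD]
    simp only [mul_apply, Matrix.of_apply, Matrix.star_apply, vecMulVec_apply, Pi.star_apply]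
    rw [Finset.sum_eq_single i₀]
    · rw [hi₀]; push_cast; ring
    · intro b _ hb; rw [hrest b hb]; push_cast; ring
    · intro h; exact absurd (Finset.mem_univ i₀) h
  · have h1 := congrFun (congrFun hUU' i₀) i₀
    simp only [mul_apply, Matrix.one_apply_eq, Matrix.star_apply] at h1
    have h2 : ((∑ x, Complex.normSq (U x i₀) : ℝ) : ℂ) = 1 := by
      rw [← h1]
      push_cast
      congr 1 with x
      rw [Complex.star_def, ← Complex.normSq_eq_conj_mul_self]
    exact_mod_cast h2

/-- For pure states the geometric measure of coherence equals `1 - max_i ρ_ii`. -/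
theorem geometric_coherence_pure {d : ℕ}
    (ρ : Matrix (Fin d) (Fin d) ℂ) (hρ : IsDensity ρ) (hpure : ρ * ρ = ρ) :
    Cg ρ = 1 - ⨆ i : Fin d, (ρ i i).re := by
  rw [Cg]
  congr 1
  rcases Nat.eq_zero_or_pos d with hd | hd
  · subst hd
    have hempty : {x : ℝ | ∃ σ : Matrix (Fin 0) (Fin 0) ℂ, IsIncoherent σ ∧ x = fid ρ σ}
        = ∅ := by
      ext x
      simp only [Set.mem_setOf_eq, Set.mem_empty_iff_false, iff_false, not_exists]
      rintro σ ⟨⟨⟨_, htr⟩, _⟩, _⟩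
      have h0 : σ.trace = 0 := by simp [Matrix.trace]
      rw [h0] at htr
      exact zero_ne_one htr
    rw [hempty, Real.sSup_empty, Real.iSup_of_isEmpty]
  · have : Nonempty (Fin d) := ⟨⟨0, hd⟩⟩
    obtain ⟨v, hv, hnorm⟩ := pure_density_decomp hρ hpure
    have hdiagre : ∀ j, (ρ j j).re = Complex.normSq (v j) := fun j => by
      rw [hv]; simp [vecMulVec_apply, Complex.mul_conj]
    set M : ℝ := ⨆ i, (ρ i i).re with hM
    obtain ⟨i₀, hmax⟩ := Finite.exists_max fun i : Fin d => (ρ i i).re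
    have hbdd : BddAbove (Set.range fun i : Fin d => (ρ i i).re) :=
      Set.Finite.bddAbove (Set.finite_range _)
    have hMeq : M = (ρ i₀ i₀).re := le_antisymm (ciSup_le hmax) (le_ciSup hbdd i₀)
    set σ₀ : Matrix (Fin d) (Fin d) ℂ := diagonal (fun j => if j = i₀ then (1 : ℂ) else 0)
      with hσ₀
    have hinc : IsIncoherent σ₀ := by
      refine ⟨⟨Matrix.PosSemidef.diagonal fun j => ?_, ?_⟩, isDiag_diagonal _⟩
      · dsimp only
        split
        · exact zero_le_one
        · exact le_refl 0
      · rw [hσ₀, trace_diagonal]; simp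
    have hfid₀ : fid ρ σ₀ = Complex.normSq (v i₀) := by
      rw [hv, fid_pure_incoherent v hinc]
      rw [Finset.sum_eq_single i₀]
      · simp [hσ₀, diagonal_apply_eq]
      · intro b _ hb; simp [hσ₀, diagonal_apply_eq, hb]
      · intro h; exact absurd (Finset.mem_univ i₀) h
    have hub : ∀ x ∈ {x : ℝ | ∃ σ : Matrix (Fin d) (Fin d) ℂ, IsIncoherent σ ∧ x = fid ρ σ},
        x ≤ M := by
      rintro x ⟨σ, hinc', rfl⟩
      rw [hv, fid_pure_incoherent v hinc']
      have hqsum : ∑ j, (σ j j).re = 1 := by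
        have h1 := congrArg Complex.re hinc'.1.2
        simpa [Matrix.trace, Matrix.diag, Complex.re_sum] using h1
      have hqnn : ∀ j, 0 ≤ (σ j j).re := fun j => by
        have := diag_nonneg hinc'.1.1 j
        rw [Complex.le_def] at this
        simpa using this.1
      calc ∑ j, (σ j j).re * Complex.normSq (v j)
          ≤ ∑ j, (σ j j).re * M := by
            refine Finset.sum_le_sum fun j _ => ?_
            refine mul_le_mul_of_nonneg_left ?_ (hqnn j)
            rw [← hdiagre j]
            exact le_ciSup hbdd j
        _ = M := by rw [← Finset.sum_mul, hqsum, one_mul]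
    have hmem : M ∈ {x : ℝ | ∃ σ : Matrix (Fin d) (Fin d) ℂ, IsIncoherent σ ∧ x = fid ρ σ} :=
      ⟨σ₀, hinc, by rw [hfid₀, hMeq, hdiagre i₀]⟩
    exact le_antisymm (csSup_le ⟨M, hmem⟩ hub) (le_csSup ⟨M, hub⟩ hmem)
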